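/- For any positive integers n and k and any complex number α not a nonpositive integer, the k-th derivative of the generalized binomial coefficient satisfies (d^k/dα^k) C(n+α-1, n) = k! · C(n+α-1, n) · ζ_n({1}_k; α), where C(n+α-1,n) = (α)_n/n! and ζ_n({1}_k; α) = Σ_{n ≥ n_1 > ... > n_k ≥ 1} Π_j 1/(n_j+α-1). -/

import Mathlib

/-- Pochhammer symbol `(α)_n = α(α+1)⋯(α+n-1)`. -/
noncomputable def poch (α : ℂ) (n : ℕ) : ℂ := ∏ i ∈ Finset.range n, (α + i)

/-- Hurwitz-type multiple harmonic sum `ζ_n({1}_k; a) = Σ_{n ≥ n_1 > ⋯ > n_k ≥ 1} Π 1/(n_j+a-1)`. -/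
noncomputable def hmhs (a : ℂ) : ℕ → ℕ → ℂ
  | _, 0 => 1
  | n, k + 1 => ∑ j ∈ Finset.Icc 1 n, (1 / ((j : ℂ) + a - 1)) * hmhs a (j - 1) k
  termination_by n k => k

/-- Hurwitz-type multiple harmonic star sum `ζ_n^⋆({1}_k; a) = Σ_{n ≥ n_1 ≥ ⋯ ≥ n_k ≥ 1} Π 1/(n_j+a-1)`. -/
noncomputable def hmhsStar (a : ℂ) : ℕ → ℕ → ℂ
  | _, 0 => 1
  | n, k + 1 => ∑ j ∈ Finset.Icc 1 n, (1 / ((j : ℂ) + a - 1)) * hmhsStar a j k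
  termination_by n k => k

/-! Since `(α)_{n+1} = (α)_n (α + n)`, Leibniz's rule gives
`D^{k+1} (α)_{n+1} = D^{k+1} (α)_n · (α + n) + (k + 1) D^k (α)_n`. After division by
`(k + 1)! (α)_{n+1}` this is the recurrence
`ζ_{n+1}({1}_{k+1}; α) = ζ_n({1}_{k+1}; α) + ζ_n({1}_k; α) / (n + α)`, obtained by splitting
the sum according to whether `n_1 = n + 1`. Induction on `n` therefore yields
`D^k (α)_n = k! (α)_n ζ_n({1}_k; α)`, and the binomial coefficient is `(α)_n / n!`. -/

lemma iteratedDeriv_id_add_const {𝕜 : Type*} [NontriviallyNormedField 𝕜] (k : ℕ) (c x : 𝕜) :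
    iteratedDeriv k (fun a => a + c) x = if k = 0 then x + c else if k = 1 then 1 else 0 := by
  rw [iteratedDeriv_fun_add (by fun_prop) (by fun_prop), iteratedDeriv_fun_id, iteratedDeriv_const]
  split_ifs <;> simp

lemma iteratedDeriv_succ_mul_add_const {𝕜 : Type*} [NontriviallyNormedField 𝕜] {g : 𝕜 → 𝕜}
    {k : ℕ} {x : 𝕜} (hg : ContDiffAt 𝕜 (k + 1) g x) (c : 𝕜) :
    iteratedDeriv (k + 1) (fun a => g a * (a + c)) x =
      iteratedDeriv (k + 1) g x * (x + c) + (k + 1) * iteratedDeriv k g x := by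
  rw [iteratedDeriv_fun_mul hg (by fun_prop), Finset.sum_range_succ, Finset.sum_range_succ,
    Finset.sum_eq_zero fun i hi => ?_]
  · simp [iteratedDeriv_id_add_const]
    ring
  · have : 2 ≤ k + 1 - i := by grind
    simp [iteratedDeriv_id_add_const, show k + 1 - i ≠ 0 by omega, show k + 1 - i ≠ 1 by omega]

lemma poch_succ (a : ℂ) (n : ℕ) : poch a (n + 1) = poch a n * (a + n) :=
  Finset.prod_range_succ _ _

lemma contDiff_poch (n : ℕ) : ContDiff ℂ ⊤ (poch · n) := by
  unfold poch
  fun_prop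

lemma hmhs_zero_right (a : ℂ) (n : ℕ) : hmhs a n 0 = 1 := by
  rw [hmhs]

lemma hmhs_zero_succ (a : ℂ) (k : ℕ) : hmhs a 0 (k + 1) = 0 := by
  simp [hmhs]

lemma hmhs_succ_succ (a : ℂ) (n k : ℕ) :
    hmhs a (n + 1) (k + 1) = hmhs a n (k + 1) + 1 / (n + a) * hmhs a n k := by
  rw [hmhs, hmhs, Finset.sum_Icc_succ_top (by omega)]
  congr 2
  push_cast
  ring

theorem iteratedDeriv_poch (n k : ℕ) (α : ℂ) (hα : ∀ i < n, α + i ≠ 0) :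
    iteratedDeriv k (poch · n) α = k.factorial * poch α n * hmhs α n k := by
  induction n generalizing k with
  | zero => cases k <;> simp [poch, iteratedDeriv_const, hmhs_zero_right, hmhs_zero_succ]
  | succ n ih =>
    cases k with
    | zero => simp [hmhs_zero_right]
    | succ k =>
      have hαn : α + n ≠ 0 := hα n n.lt_succ_self
      have ih' (k : ℕ) := ih k fun i hi => hα i (hi.trans n.lt_succ_self)
      simp_rw [poch_succ]
      rw [iteratedDeriv_succ_mul_add_const ((contDiff_poch n).contDiffAt.of_le le_top), ih', ih',
        hmhs_succ_succ, add_comm (n : ℂ) α, Nat.factorial_succ]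
      push_cast
      field_simp

theorem iteratedDeriv_binom_general (n k : ℕ) (α : ℂ)
    (hα : ∀ m : ℕ, α ≠ -(m : ℂ)) :
    iteratedDeriv k (fun a : ℂ => poch a n / (n.factorial : ℂ)) α =
      (k.factorial : ℂ) * (poch α n / (n.factorial : ℂ)) * hmhs α n k := by
  rw [iteratedDeriv_div_const,
    iteratedDeriv_poch n k α fun i _ h => hα i (eq_neg_of_add_eq_zero_left h)]
  ring

theorem iteratedDeriv_binom (n k : ℕ) (hn : 1 ≤ n) (hk : 1 ≤ k) (α : ℂ)
    (hα : ∀ m : ℕ, α ≠ -(m : ℂ)) :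
    iteratedDeriv k (fun a : ℂ => poch a n / (n.factorial : ℂ)) α =
      (k.factorial : ℂ) * (poch α n / (n.factorial : ℂ)) * hmhs α n k :=
  iteratedDeriv_binom_general n k α hα
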